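/- arXiv:1807.00391 — 2 statements merged into one kernel-verified Lean document; each statement's English description precedes it below -/
import Mathlib

section
/- Let N ≥ 1 and let δ be a positive divisor of N. For a positive divisor Q of N with gcd(Q, N/Q) = 1, let δ_Q be the largest divisor of δ all of whose prime factors divide Q, set δ' = (Q/δ_Q)·(δ/δ_Q), and let N_{δ'} be the largest divisor of N all of whose prime factors divide δ'. Then: (i) gcd(δ, N/δ) divides N_{δ'}/δ' for every such Q; (ii) for Q₀ = ∏_{p prime, p ∣ N, 0 < v_p(δ) ≤ v_p(N)/2} p^{v_p(N)}, where v_p denotes the p-adic valuation, one has gcd(Q₀, N/Q₀) = 1 and N_{δ'}/δ' = gcd(δ, N/δ). -/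
/-
Everything is multiplicative, so it suffices to compare `p`-adic valuations. Fix a prime `p`
and write `a = v_p(δ) ≤ n = v_p(N)`. Since `Q ∥ N`, `v_p(Q)` is `0` or `n`, so `v_p(δ')` is
`n - a` when `p ∣ Q` and `a` otherwise, while `v_p(N_{δ'}/δ')` is `n - v_p(δ')` or `0`
according as `p ∣ δ'` or not. Hence `v_p(N_{δ'}/δ')` is `a` (or `0` if `a = n`) when `p ∣ Q`,
and `n - a` (or `0` if `a = 0`) when `p ∤ Q`. Either way it is at least
`min(a, n - a) = v_p(gcd(δ, N/δ))`, and putting `p ∣ Q` exactly when `0 < a ≤ n/2`, as `Q₀`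
does, attains the minimum at every prime.
-/

/-- `cPart q n` is the largest divisor of `n` all of whose prime factors divide `q`. -/
def cPart (q n : ℕ) : ℕ :=
  ∏ p ∈ n.primeFactors.filter (fun p => p ∣ q), p ^ n.factorization p

/-- `δ' = (Q/δ_Q)·(δ/δ_Q)`, the denominator of the image of a cusp of denominator `δ`
under the Atkin–Lehner involution `W_Q`; here `δ_Q = cPart Q δ`. -/
def deltaPrime (Q δ : ℕ) : ℕ := (Q / cPart Q δ) * (δ / cPart Q δ)

namespace Nat

theorem factorization_prod_primeFactors_filter_pow (n : ℕ) (P : ℕ → Prop) [DecidablePred P] :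
    (∏ p ∈ n.primeFactors.filter P, p ^ n.factorization p).factorization =
      n.factorization.filter P := by
  rw [← support_factorization, ← Finsupp.support_filter, ← Finsupp.prod_filter_index]
  exact prod_pow_factorization_eq_self fun p hp =>
    prime_of_mem_primeFactors (Finset.mem_of_mem_filter p hp)

theorem prod_primeFactors_filter_pow_ne_zero (n : ℕ) (P : ℕ → Prop) [DecidablePred P] :
    ∏ p ∈ n.primeFactors.filter P, p ^ n.factorization p ≠ 0 :=
  Finset.prod_ne_zero_iff.2 fun p hp =>
    pow_ne_zero _ (prime_of_mem_primeFactors (Finset.mem_of_mem_filter p hp)).ne_zero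

theorem prod_primeFactors_filter_pow_dvd (n : ℕ) (P : ℕ → Prop) [DecidablePred P] :
    ∏ p ∈ n.primeFactors.filter P, p ^ n.factorization p ∣ n := by
  rcases eq_or_ne n 0 with rfl | hn
  · exact dvd_zero _
  conv_rhs => rw [← prod_factorization_pow_eq_self hn]
  exact Finset.prod_dvd_prod_of_subset _ _ _ (Finset.filter_subset _ _)

theorem coprime_prod_primeFactors_filter_pow_div (n : ℕ) (P : ℕ → Prop) [DecidablePred P]
    (hn : n ≠ 0) :
    Coprime (∏ p ∈ n.primeFactors.filter P, p ^ n.factorization p)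
      (n / ∏ p ∈ n.primeFactors.filter P, p ^ n.factorization p) := by
  set A := ∏ p ∈ n.primeFactors.filter P, p ^ n.factorization p
  set B := ∏ p ∈ n.primeFactors.filter (¬P ·), p ^ n.factorization p
  have hAB : A * B = n := by
    rw [Finset.prod_filter_mul_prod_filter_not]
    exact prod_factorization_pow_eq_self hn
  rw [← hAB, Nat.mul_div_cancel_left _
    (Nat.pos_of_ne_zero (prod_primeFactors_filter_pow_ne_zero n P))]
  refine Coprime.prod_left fun p hp => Coprime.prod_right fun q hq => Coprime.pow _ _ ?_
  refine (coprime_primes (prime_of_mem_primeFactors (Finset.mem_of_mem_filter p hp))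
    (prime_of_mem_primeFactors (Finset.mem_of_mem_filter q hq))).2 ?_
  rintro rfl
  exact (Finset.mem_filter.1 hq).2 (Finset.mem_filter.1 hp).2

theorem factorization_eq_of_coprime_div {Q N p : ℕ} (hQN : Q ∣ N) (hcop : Coprime Q (N / Q))
    (hp : p ∣ Q) : Q.factorization p = N.factorization p := by
  have hrest : (N / Q).factorization p = 0 := by
    by_cases h : p ∣ N / Q
    · simp [eq_one_of_dvd_coprimes hcop hp h]
    · exact factorization_eq_zero_of_not_dvd h
  conv_rhs => rw [← Nat.mul_div_cancel' hQN]
  rw [factorization_mul_of_coprime hcop, Finsupp.add_apply, hrest, add_zero]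

theorem factorization_gcd_div {d n : ℕ} (hn : n ≠ 0) (hd : d ≠ 0) (hdn : d ∣ n) (p : ℕ) :
    (gcd d (n / d)).factorization p =
      min (d.factorization p) (n.factorization p - d.factorization p) := by
  rw [factorization_gcd hd (div_ne_zero_iff_of_dvd hdn |>.2 ⟨hn, hd⟩), Finsupp.inf_apply,
    factorization_div hdn, Finsupp.tsub_apply]

end Nat

open Nat

theorem factorization_cPart (q n : ℕ) :
    (cPart q n).factorization = n.factorization.filter (· ∣ q) :=
  factorization_prod_primeFactors_filter_pow n _

theorem cPart_ne_zero (q n : ℕ) : cPart q n ≠ 0 := prod_primeFactors_filter_pow_ne_zero n _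

theorem cPart_dvd (q n : ℕ) : cPart q n ∣ n := prod_primeFactors_filter_pow_dvd n _

theorem self_dvd_cPart_self {d N : ℕ} (hN : N ≠ 0) (hd : d ≠ 0) (hdN : d ∣ N) :
    d ∣ cPart d N := by
  rw [← factorization_le_iff_dvd hd (cPart_ne_zero d N), factorization_cPart]
  intro p
  rw [Finsupp.filter_apply]
  split_ifs with hp
  · exact (factorization_le_iff_dvd hd hN).2 hdN p
  · exact (factorization_eq_zero_of_not_dvd hp).le

theorem factorization_cPart_self_div {d N : ℕ} (hN : N ≠ 0) (hd : d ≠ 0) (hdN : d ∣ N)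
    (p : ℕ) :
    (cPart d N / d).factorization p =
      if p ∣ d then N.factorization p - d.factorization p else 0 := by
  rw [factorization_div (self_dvd_cPart_self hN hd hdN), Finsupp.tsub_apply, factorization_cPart,
    Finsupp.filter_apply]
  split_ifs with hp
  · rfl
  · simp

section UnitaryDivisor

variable {N Q δ : ℕ}

theorem cPart_dvd_of_coprime_div (hN : N ≠ 0) (hQN : Q ∣ N) (hcop : Coprime Q (N / Q))
    (hδN : δ ∣ N) : cPart Q δ ∣ Q := by
  have hQ : Q ≠ 0 := ne_zero_of_dvd_ne_zero hN hQN
  rw [← factorization_le_iff_dvd (cPart_ne_zero Q δ) hQ, factorization_cPart]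
  intro p
  rw [Finsupp.filter_apply]
  split_ifs with hp
  · rw [factorization_eq_of_coprime_div hQN hcop hp]
    exact (factorization_le_iff_dvd (ne_zero_of_dvd_ne_zero hN hδN) hN).2 hδN p
  · exact zero_le _

theorem deltaPrime_ne_zero (hN : N ≠ 0) (hQN : Q ∣ N) (hcop : Coprime Q (N / Q))
    (hδN : δ ∣ N) : deltaPrime Q δ ≠ 0 :=
  mul_ne_zero
    ((div_ne_zero_iff_of_dvd (cPart_dvd_of_coprime_div hN hQN hcop hδN)).2
      ⟨ne_zero_of_dvd_ne_zero hN hQN, cPart_ne_zero Q δ⟩)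
    ((div_ne_zero_iff_of_dvd (cPart_dvd Q δ)).2
      ⟨ne_zero_of_dvd_ne_zero hN hδN, cPart_ne_zero Q δ⟩)

theorem factorization_deltaPrime (hN : N ≠ 0) (hQN : Q ∣ N) (hcop : Coprime Q (N / Q))
    (hδN : δ ∣ N) (p : ℕ) :
    (deltaPrime Q δ).factorization p =
      if p ∣ Q then N.factorization p - δ.factorization p else δ.factorization p := by
  obtain ⟨hQc, hδc⟩ := mul_ne_zero_iff.1 (deltaPrime_ne_zero hN hQN hcop hδN)
  rw [deltaPrime, Nat.factorization_mul hQc hδc, Finsupp.add_apply,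
    factorization_div (cPart_dvd_of_coprime_div hN hQN hcop hδN),
    factorization_div (cPart_dvd Q δ), Finsupp.tsub_apply,
    Finsupp.tsub_apply, factorization_cPart, Finsupp.filter_apply]
  split_ifs with hp
  · rw [factorization_eq_of_coprime_div hQN hcop hp]; omega
  · rw [factorization_eq_zero_of_not_dvd hp]; omega

theorem deltaPrime_dvd (hN : N ≠ 0) (hQN : Q ∣ N) (hcop : Coprime Q (N / Q)) (hδN : δ ∣ N) :
    deltaPrime Q δ ∣ N := by
  rw [← factorization_le_iff_dvd (deltaPrime_ne_zero hN hQN hcop hδN) hN]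
  intro p
  have hδp := (factorization_le_iff_dvd (ne_zero_of_dvd_ne_zero hN hδN) hN).2 hδN p
  rw [factorization_deltaPrime hN hQN hcop hδN]
  split_ifs <;> omega

theorem factorization_cPart_deltaPrime_div (hN : N ≠ 0) (hQN : Q ∣ N) (hcop : Coprime Q (N / Q))
    (hδN : δ ∣ N) (p : ℕ) :
    (cPart (deltaPrime Q δ) N / deltaPrime Q δ).factorization p =
      if 0 < Q.factorization p then
        (if δ.factorization p < N.factorization p then δ.factorization p else 0)
      else (if 0 < δ.factorization p then N.factorization p - δ.factorization p else 0) := by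
  have hδ' := deltaPrime_ne_zero hN hQN hcop hδN
  rw [factorization_cPart_self_div hN hδ' (deltaPrime_dvd hN hQN hcop hδN)]
  by_cases hp : p.Prime
  · have hδp := (factorization_le_iff_dvd (ne_zero_of_dvd_ne_zero hN hδN) hN).2 hδN p
    simp only [hp.dvd_iff_one_le_factorization hδ', factorization_deltaPrime hN hQN hcop hδN,
      hp.dvd_iff_one_le_factorization (ne_zero_of_dvd_ne_zero hN hQN)]
    split_ifs <;> omega
  · simp [factorization_eq_zero_of_not_prime _ hp]

theorem cPart_deltaPrime_div_ne_zero (hN : N ≠ 0) (hQN : Q ∣ N) (hcop : Coprime Q (N / Q))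
    (hδN : δ ∣ N) : cPart (deltaPrime Q δ) N / deltaPrime Q δ ≠ 0 :=
  have hδ' := deltaPrime_ne_zero hN hQN hcop hδN
  (div_ne_zero_iff_of_dvd (self_dvd_cPart_self hN hδ' (deltaPrime_dvd hN hQN hcop hδN))).2
    ⟨cPart_ne_zero _ _, hδ'⟩

end UnitaryDivisor

/-- Let `δ` be a positive divisor of `N ≥ 1`. For `Q ∥ N` set
`δ' = (Q/δ_Q)(δ/δ_Q)` and let `N_{δ'}` be the largest divisor of `N` whose prime factors
divide `δ'`. Then (i) `gcd(δ, N/δ) ∣ N_{δ'}/δ'` for every such `Q`; (ii) for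
`Q₀ = ∏_{p ∣ N, 0 < v_p(δ) ≤ v_p(N)/2} p^{v_p(N)}` one has `gcd(Q₀, N/Q₀) = 1` and
`N_{δ'}/δ' = gcd(δ, N/δ)`. -/
theorem stmt_14 (N δ : ℕ) (hN : 1 ≤ N) (hδpos : 0 < δ) (hδdvd : δ ∣ N)
    (Q₀ : ℕ)
    (hQ₀ : Q₀ = ∏ p ∈ N.primeFactors.filter
      (fun p => 0 < δ.factorization p ∧ 2 * δ.factorization p ≤ N.factorization p),
      p ^ N.factorization p) :
    (∀ Q : ℕ, 0 < Q → Q ∣ N → Nat.gcd Q (N / Q) = 1 →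
      Nat.gcd δ (N / δ) ∣ cPart (deltaPrime Q δ) N / deltaPrime Q δ) ∧
    Nat.gcd Q₀ (N / Q₀) = 1 ∧
    cPart (deltaPrime Q₀ δ) N / deltaPrime Q₀ δ = Nat.gcd δ (N / δ) := by
  have hN0 : N ≠ 0 := by omega
  have hδle := (factorization_le_iff_dvd hδpos.ne' hN0).2 hδdvd
  have hgcd : Nat.gcd δ (N / δ) ≠ 0 := gcd_ne_zero_left hδpos.ne'
  have hQ₀N : Q₀ ∣ N := hQ₀ ▸ prod_primeFactors_filter_pow_dvd N _
  have hQ₀cop : Coprime Q₀ (N / Q₀) :=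
    hQ₀ ▸ coprime_prod_primeFactors_filter_pow_div N _ hN0
  refine ⟨fun Q _ hQN hcop => ?_, hQ₀cop, ?_⟩
  · rw [← factorization_le_iff_dvd hgcd (cPart_deltaPrime_div_ne_zero hN0 hQN hcop hδdvd)]
    intro p
    have := hδle p
    rw [factorization_gcd_div hN0 hδpos.ne' hδdvd,
      factorization_cPart_deltaPrime_div hN0 hQN hcop hδdvd]
    split_ifs <;> omega
  · refine eq_of_factorization_eq (cPart_deltaPrime_div_ne_zero hN0 hQ₀N hQ₀cop hδdvd) hgcd
      fun p => ?_
    have := hδle p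
    rw [factorization_gcd_div hN0 hδpos.ne' hδdvd,
      factorization_cPart_deltaPrime_div hN0 hQ₀N hQ₀cop hδdvd, hQ₀,
      factorization_prod_primeFactors_filter_pow, Finsupp.filter_apply]
    split_ifs <;> omega
end

section
/- Let N ≥ 1, k ≥ 2, let s be the largest divisor of 24 such that s² divides N, and let w ∈ {1, −1}. Let f and h be cusp forms of weight k on Γ₀(N) such that: {γ ∈ SL₂(ℤ) : f|_k γ = f} = Γ₀(N) and {γ ∈ SL₂(ℤ) : h|_k γ = h} = Γ₀(N); f|_k W_N = w·f and h|_k W_N = w·h, where (f|_k W_N)(τ) = N^{−k/2} τ^{−k} f(−1/(Nτ)); there is a field automorphism σ of ℂ with a_n(h) = σ(a_n(f)) for all n ≥ 1; and there exists n₀ ≥ 1 coprime to s with a_{n₀}(f) a nonzero rational number. If f|_k g = h for some g ∈ SL₂(ℤ), then h = f and g ∈ Γ₀(N). -/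
open Complex UpperHalfPlane CongruenceSubgroup
open scoped ModularForm MatrixGroups Real

noncomputable section

/-- `f` has the Fourier expansion `Σ_{n ≥ 0} c n · e^{2πinτ/N}`. -/
def HasExpansion (N : ℕ) (f : ℍ → ℂ) (c : ℕ → ℂ) : Prop :=
  ∀ τ : ℍ, HasSum (fun n : ℕ => c n * Complex.exp (2 * Real.pi * Complex.I * n * (τ : ℂ) / N)) (f τ)

/-- `F` is an eigenvector of the Fricke involution `W_N` with eigenvalue `w`:
`N^{−k/2} τ^{−k} F(−1/(Nτ)) = w·F(τ)`. -/
def FrickeEigen (N : ℕ) (k : ℤ) (F : ℍ → ℂ) (w : ℂ) : Prop :=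
  ∀ τ τ' : ℍ, (τ' : ℂ) = -1 / ((N : ℂ) * (τ : ℂ)) →
    (Real.sqrt N : ℂ) ^ (-k) * (τ : ℂ) ^ (-k) * F τ' = w * F τ

/-!
Since the stabiliser of `h = f ∣ g` is `g⁻¹ Γ₀(N) g`, the matrix `g` normalises `Γ₀(N)`.
Conjugating `T` and the matrices `(x, *; N, *)` by `g` shows `N ∣ c²` and `N ∣ c d (x² - 1)` for
every `x` prime to `N`, where `(c, d)` is the bottom row of `g`. Writing `N = D · gcd(N, c)`, this
gives `D² ∣ N` and `x² ≡ 1 (mod D)` for all units `x`, so `D ∣ 24`, hence `D ∣ s` and `N ∣ s c`.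
Then `g = (1, 0; M, 1) γ` with `γ ∈ Γ₀(N)` and `M = (N / s) j`, so `f ∣ (1, 0; M, 1) = h`.
Conjugation by the Fricke involution turns `(1, 0; M, 1)` into the translation `τ ↦ τ - M / N`,
so `a_n(h) = e(-n M / N) a_n(f)`. At `n = n₀` the coefficient is a nonzero rational, fixed by `σ`,
so `e(-n₀ j / s) = 1`; thus `s ∣ j`, `(1, 0; M, 1) ∈ Γ₀(N)`, and therefore `g ∈ Γ₀(N)` and `h = f`.
-/

lemma Gamma0_mem_iff_dvd {N : ℕ} {A : SL(2, ℤ)} : A ∈ Gamma0 N ↔ (N : ℤ) ∣ A 1 0 := by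
  rw [Gamma0_mem, ZMod.intCast_zmod_eq_zero_iff_dvd]

def lowerUnipotent (x : ℤ) : SL(2, ℤ) := ⟨!![1, 0; x, 1], by simp⟩

@[simp] lemma lowerUnipotent_apply_zero_zero (x : ℤ) : lowerUnipotent x 0 0 = 1 := rfl
@[simp] lemma lowerUnipotent_apply_zero_one (x : ℤ) : lowerUnipotent x 0 1 = 0 := rfl
@[simp] lemma lowerUnipotent_apply_one_zero (x : ℤ) : lowerUnipotent x 1 0 = x := rfl
@[simp] lemma lowerUnipotent_apply_one_one (x : ℤ) : lowerUnipotent x 1 1 = 1 := rfl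

lemma lowerUnipotent_mem_Gamma0 {N : ℕ} {x : ℤ} (hx : (N : ℤ) ∣ x) :
    lowerUnipotent x ∈ Gamma0 N := by
  rwa [Gamma0_mem_iff_dvd, lowerUnipotent_apply_one_zero]

lemma inv_lowerUnipotent_mul_apply_one_zero (x : ℤ) (g : SL(2, ℤ)) :
    ((lowerUnipotent x)⁻¹ * g) 1 0 = g 1 0 - x * g 0 0 := by
  rw [Matrix.SpecialLinearGroup.coe_mul, Matrix.mul_apply]
  simp only [Matrix.SpecialLinearGroup.SL2_inv_expl, Fin.isValue, lowerUnipotent_apply_one_one,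
    lowerUnipotent_apply_zero_one, neg_zero, lowerUnipotent_apply_one_zero,
    lowerUnipotent_apply_zero_zero, Matrix.cons_val', Matrix.cons_val_fin_one, Matrix.cons_val_one,
    Fin.sum_univ_two, Matrix.cons_val_zero, neg_mul, one_mul]
  ring

lemma conj_apply_one_zero (g M : SL(2, ℤ)) :
    (g * M * g⁻¹) 1 0 =
      g 1 0 * g 1 1 * (M 0 0 - M 1 1) + g 1 1 ^ 2 * M 1 0 - g 1 0 ^ 2 * M 0 1 := by
  rw [Matrix.SpecialLinearGroup.coe_mul, Matrix.SpecialLinearGroup.coe_mul, Matrix.mul_apply]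
  simp only [Fin.isValue, Matrix.mul_apply, Fin.sum_univ_two,
    Matrix.SpecialLinearGroup.SL2_inv_expl, Matrix.cons_val', Matrix.cons_val_zero, Matrix.cons_val_fin_one, Matrix.cons_val_one, mul_neg]
  ring

lemma conj_mem_of_slash_eq {k : ℤ} {Γ : Subgroup SL(2, ℤ)} {f h : ℍ → ℂ} {g : SL(2, ℤ)}
    (hf : ∀ γ : SL(2, ℤ), f ∣[k] γ = f → γ ∈ Γ) (hh : ∀ γ ∈ Γ, h ∣[k] γ = h)
    (hfg : f ∣[k] g = h) {M : SL(2, ℤ)} (hM : M ∈ Γ) : g * M * g⁻¹ ∈ Γ := by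
  apply hf
  rw [SlashAction.slash_mul, SlashAction.slash_mul, hfg, hh M hM, ← hfg, ← SlashAction.slash_mul,
    mul_inv_cancel, SlashAction.slash_one]

lemma dvd_sq_of_conj_mem_Gamma0 {N : ℕ} {g : SL(2, ℤ)}
    (hg : ∀ M ∈ Gamma0 N, g * M * g⁻¹ ∈ Gamma0 N) : (N : ℤ) ∣ g 1 0 ^ 2 := by
  have h := hg ModularGroup.T (by rw [Gamma0_mem_iff_dvd]; simp [ModularGroup.T])
  rw [Gamma0_mem_iff_dvd, conj_apply_one_zero] at h
  simpa [ModularGroup.T] using h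

lemma dvd_mul_sq_sub_one_of_conj_mem_Gamma0 {N : ℕ} {g : SL(2, ℤ)}
    (hg : ∀ M ∈ Gamma0 N, g * M * g⁻¹ ∈ Gamma0 N) {x : ℤ} (hx : IsCoprime x N) :
    (N : ℤ) ∣ g 1 0 * g 1 1 * (x ^ 2 - 1) := by
  obtain ⟨u, v, huv⟩ := hx
  let M : SL(2, ℤ) := ⟨!![x, -v; (N : ℤ), u], by simp [Matrix.det_fin_two_of]; linarith⟩
  have h := hg M (by rw [Gamma0_mem_iff_dvd]; simp [M])
  simp only [Gamma0_mem_iff_dvd, conj_apply_one_zero] at h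
  obtain ⟨r, hr⟩ := dvd_sq_of_conj_mem_Gamma0 hg
  obtain ⟨q, hq⟩ : (N : ℤ) ∣ g 1 0 * g 1 1 * (x - u) + g 1 1 ^ 2 * N - g 1 0 ^ 2 * -v := h
  exact ⟨x * (q - g 1 1 ^ 2 - r * v) - g 1 0 * g 1 1 * v,
    by linear_combination x * hq + g 1 0 * g 1 1 * huv - x * v * hr⟩

-- Witnesses: `5 ^ 2 - 1 = 24`, and for `p = 5`, `7 ^ 2 - 1 = 48` is prime to `5`.
lemma le_factorization_twentyFour_of_forall_pow_dvd_sq_sub_one {p a : ℕ} (hp : p.Prime)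
    (h : ∀ y : ℤ, ¬ (p : ℤ) ∣ y → (p : ℤ) ^ a ∣ y ^ 2 - 1) : a ≤ Nat.factorization 24 p := by
  by_cases hp5 : p = 5
  · subst hp5
    rcases Nat.eq_zero_or_pos a with rfl | ha
    · exact Nat.zero_le _
    · have h48 := (dvd_pow_self (5 : ℤ) ha.ne').trans (h 7 (by norm_num))
      norm_num at h48
  · have h5 : ¬ (p : ℤ) ∣ 5 := by
      rw [show (5 : ℤ) = (5 : ℕ) from rfl, Int.natCast_dvd_natCast,
        Nat.prime_dvd_prime_iff_eq hp Nat.prime_five]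
      exact hp5
    have h24 : (p : ℤ) ^ a ∣ (24 : ℕ) := h 5 h5
    rw [← hp.pow_dvd_iff_le_factorization (by norm_num)]
    exact_mod_cast h24

lemma exists_isCoprime_mul_dvd_sub {A B y : ℤ} (hAB : IsCoprime A B) (hy : IsCoprime y A) :
    ∃ x, IsCoprime x (A * B) ∧ A ∣ x - y := by
  obtain ⟨u, v, huv⟩ := hAB
  have hxA : y * v * B + u * A = y + A * (u * (1 - y)) := by linear_combination y * huv
  have hxB : y * v * B + u * A = 1 + B * (v * (y - 1)) := by linear_combination huv
  refine ⟨y * v * B + u * A, IsCoprime.mul_right ?_ ?_, ⟨u * (1 - y), by rw [hxA]; ring⟩⟩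
  · rw [hxA]; exact hy.add_mul_left_left _
  · rw [hxB]; exact isCoprime_one_left.add_mul_left_left _

lemma dvd_twentyFour_of_forall_dvd_sq_sub_one {N D : ℕ} (hN : N ≠ 0) (hD : D ∣ N)
    (h : ∀ x : ℤ, IsCoprime x N → (D : ℤ) ∣ x ^ 2 - 1) : D ∣ 24 := by
  have hD0 : D ≠ 0 := ne_zero_of_dvd_ne_zero hN hD
  rw [← Nat.factorization_le_iff_dvd hD0 (by norm_num)]
  intro p
  by_cases hp : p.Prime
  swap
  · simp [Nat.factorization_eq_zero_of_not_prime _ hp]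
  refine le_factorization_twentyFour_of_forall_pow_dvd_sq_sub_one hp fun y hy => ?_
  have hpy : IsCoprime y ((p : ℤ) ^ N.factorization p) :=
    ((Nat.prime_iff_prime_int.mp hp).irreducible.coprime_iff_not_dvd.mpr hy).symm.pow_right
  have hsplit : IsCoprime ((p : ℤ) ^ N.factorization p) (ordCompl[p] N : ℕ) := by
    exact_mod_cast Nat.isCoprime_iff_coprime.mpr ((Nat.coprime_ordCompl hp hN).pow_left _)
  obtain ⟨x, hxN, hxy⟩ := exists_isCoprime_mul_dvd_sub hsplit hpy
  have hxN' : IsCoprime x N := by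
    rwa [← Nat.ordProj_mul_ordCompl_eq_self N p, Nat.cast_mul, Nat.cast_pow]
  have hpD : (p : ℤ) ^ D.factorization p ∣ D := by exact_mod_cast Nat.ordProj_dvd D p
  have hpN : (p : ℤ) ^ D.factorization p ∣ (p : ℤ) ^ N.factorization p :=
    pow_dvd_pow _ ((Nat.factorization_le_iff_dvd hD0 hN).mpr hD p)
  have hsq : (p : ℤ) ^ D.factorization p ∣ x ^ 2 - y ^ 2 :=
    (hpN.trans hxy).trans ⟨x + y, by ring⟩
  have := (hpD.trans (h x hxN')).sub hsq
  rwa [show x ^ 2 - 1 - (x ^ 2 - y ^ 2) = y ^ 2 - 1 by ring] at this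

lemma lcm_sq_dvd {a b N : ℕ} (ha : a ^ 2 ∣ N) (hb : b ^ 2 ∣ N) : a.lcm b ^ 2 ∣ N := by
  rcases eq_or_ne N 0 with rfl | hN
  · exact dvd_zero _
  have ha0 : a ≠ 0 := by rintro rfl; simp_all
  have hb0 : b ≠ 0 := by rintro rfl; simp_all
  rw [← Nat.factorization_le_iff_dvd (by positivity) hN] at ha hb ⊢
  rw [Nat.factorization_pow, Nat.factorization_lcm ha0 hb0]
  intro p
  have := ha p
  have := hb p
  simp_all only [Finsupp.smul_apply, Finsupp.sup_apply, smul_eq_mul, Nat.factorization_pow]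
  omega

lemma dvd_of_isGreatest_of_sq_dvd {m N s D : ℕ} (hm : m ≠ 0)
    (hs : IsGreatest {t : ℕ | t ∣ m ∧ t ^ 2 ∣ N} s)
    (hD : D ∣ m) (hD2 : D ^ 2 ∣ N) : D ∣ s := by
  obtain ⟨⟨hsm, hs2⟩, hmax⟩ := hs
  have hlcm : D.lcm s ∈ {t : ℕ | t ∣ m ∧ t ^ 2 ∣ N} := ⟨Nat.lcm_dvd hD hsm, lcm_sq_dvd hD2 hs2⟩
  have hle : s ≤ D.lcm s := Nat.le_of_dvd (Nat.pos_of_ne_zero (ne_zero_of_dvd_ne_zero hm hlcm.1))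
    (Nat.dvd_lcm_right D s)
  rw [← le_antisymm (hmax hlcm) hle]
  exact Nat.dvd_lcm_left D s

lemma dvd_mul_of_forall_dvd_mul_sq_sub_one {N s : ℕ} (hN : N ≠ 0)
    (hs : IsGreatest {t : ℕ | t ∣ 24 ∧ t ^ 2 ∣ N} s) {c d : ℤ} (hcd : IsCoprime c d)
    (hc2 : (N : ℤ) ∣ c ^ 2) (H : ∀ x : ℤ, IsCoprime x N → (N : ℤ) ∣ c * d * (x ^ 2 - 1)) :
    (N : ℤ) ∣ s * c := by
  obtain ⟨G, D, c', hG, hDc', hND, hcG⟩ :=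
    Int.exists_gcd_one' (Int.gcd_pos_of_ne_zero_left c (Int.natCast_ne_zero.mpr hN))
  have hDc' : IsCoprime D c' := Int.isCoprime_iff_gcd_eq_one.mpr hDc'
  have hG0 : (G : ℤ) ≠ 0 := by exact_mod_cast hG.ne'
  have hDG : D ∣ G := by
    rw [hND, hcG, show (c' * G) ^ 2 = c' ^ 2 * G * G by ring] at hc2
    exact hDc'.pow_right.dvd_of_dvd_mul_left ((mul_dvd_mul_iff_right hG0).mp hc2)
  have hDd : IsCoprime D d := hcd.of_isCoprime_of_dvd_left (hDG.trans ⟨c', by rw [hcG, mul_comm]⟩)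
  have hDN : D.natAbs ∣ N := by
    rw [← Int.natCast_dvd_natCast, Int.natCast_natAbs, abs_dvd, hND]
    exact dvd_mul_right D G
  have hD2 : D.natAbs ^ 2 ∣ N := by
    rw [← Int.natCast_dvd_natCast, Nat.cast_pow, Int.natCast_natAbs, sq_abs, hND, sq]
    exact mul_dvd_mul_left D hDG
  have hD24 : D.natAbs ∣ 24 := by
    refine dvd_twentyFour_of_forall_dvd_sq_sub_one hN hDN fun x hx => ?_
    have h := H x hx
    rw [hND, hcG, show c' * G * d * (x ^ 2 - 1) = c' * d * (x ^ 2 - 1) * G by ring] at h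
    rw [Int.natCast_natAbs, abs_dvd]
    exact (hDc'.mul_right hDd).dvd_of_dvd_mul_left ((mul_dvd_mul_iff_right hG0).mp h)
  have hDs : (D.natAbs : ℤ) ∣ s := by
    exact_mod_cast dvd_of_isGreatest_of_sq_dvd (by norm_num) hs hD24 hD2
  rw [Int.natCast_natAbs, abs_dvd] at hDs
  rw [hND, hcG, ← mul_assoc]
  exact mul_dvd_mul_right (hDs.mul_right c') G

lemma dvd_mul_apply_one_zero_of_conj_mem_Gamma0 {N s : ℕ} (hN : N ≠ 0)
    (hs : IsGreatest {t : ℕ | t ∣ 24 ∧ t ^ 2 ∣ N} s) {g : SL(2, ℤ)}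
    (hg : ∀ M ∈ Gamma0 N, g * M * g⁻¹ ∈ Gamma0 N) : (N : ℤ) ∣ s * g 1 0 :=
  dvd_mul_of_forall_dvd_mul_sq_sub_one hN hs (g.isCoprime_row 1) (dvd_sq_of_conj_mem_Gamma0 hg)
    fun _ hx => dvd_mul_sq_sub_one_of_conj_mem_Gamma0 hg hx

lemma UpperHalfPlane.exists_coe_eq_neg_one_div_mul {x : ℝ} (hx : 0 < x) (τ : ℍ) :
    ∃ τ' : ℍ, (τ' : ℂ) = -1 / (x * τ) :=
  ⟨ModularGroup.S • ((⟨x, hx⟩ : {x : ℝ // 0 < x}) • τ), by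
    rw [modular_S_smul, coe_mk, coe_pos_real_smul, Complex.real_smul, neg_div, one_div, neg_inv]⟩

lemma FrickeEigen.apply_eq_apply_vadd {N : ℕ} (hN : N ≠ 0) {k : ℤ} {w : ℂ} (hw : w ≠ 0)
    {f h : ℍ → ℂ} (hf : FrickeEigen N k f w) (hh : FrickeEigen N k h w) {M : ℤ}
    (hfh : f ∣[k] lowerUnipotent M = h) (τ : ℍ) : h τ = f ((-(M : ℝ) / N) +ᵥ τ) := by
  obtain ⟨τ', hτ'⟩ := exists_coe_eq_neg_one_div_mul (Nat.cast_pos.mpr (Nat.pos_of_ne_zero hN)) τ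
  push_cast at hτ'
  set τ₂ : ℍ := (-(M : ℝ) / N) +ᵥ τ
  have hN0 : (N : ℂ) ≠ 0 := Nat.cast_ne_zero.mpr hN
  have hτ0 : (τ : ℂ) ≠ 0 := τ.ne_zero
  have hτ₂ : (τ₂ : ℂ) = τ - M / N := by
    simp only [τ₂, coe_vadd]; push_cast; ring
  have hden : (M : ℂ) * τ' + 1 = τ₂ / τ := by
    rw [hτ', hτ₂]; field_simp; ring
  have hsmul : ((lowerUnipotent M • τ' : ℍ) : ℂ) = -1 / (N * τ₂) := by
    rw [specialLinearGroup_apply]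
    simp only [algebraMap_int_eq, Fin.isValue, lowerUnipotent_apply_zero_zero, eq_intCast,
      Int.cast_one, ofReal_one, one_mul, lowerUnipotent_apply_zero_one, Int.cast_zero, ofReal_zero,
      add_zero, lowerUnipotent_apply_one_zero, ofReal_intCast, lowerUnipotent_apply_one_one]
    rw [hden, hτ', hτ₂]
    field_simp
  have hval : h τ' = f (lowerUnipotent M • τ') * (τ₂ / τ) ^ (-k) := by
    rw [← hfh, ModularForm.SL_slash_apply, ← hden]
    congr 2
    simp [denom]
  refine mul_left_cancel₀ hw ?_
  calc w * h τ = (Real.sqrt N : ℂ) ^ (-k) * (τ : ℂ) ^ (-k) * h τ' := (hh τ τ' hτ').symm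
    _ = (Real.sqrt N : ℂ) ^ (-k) * (τ₂ : ℂ) ^ (-k) * f (lowerUnipotent M • τ') := by
      rw [hval, div_zpow, zpow_neg (τ : ℂ) k]
      field_simp
    _ = w * f τ₂ := hf τ₂ _ hsmul

lemma HasExpansion.vadd {N : ℕ} {F : ℍ → ℂ} {c : ℕ → ℂ} (hF : HasExpansion N F c) (μ : ℝ) :
    HasExpansion N (fun τ => F (μ +ᵥ τ)) (fun n => c n * cexp (2 * π * Complex.I * n * μ / N)) := by
  intro τ
  convert hF (μ +ᵥ τ) using 2 with n
  rw [coe_vadd, mul_assoc, ← Complex.exp_add]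
  ring_nf

lemma HasExpansion.hasSum_qParam {F : ℍ → ℂ} {c : ℕ → ℂ} (hF : HasExpansion 1 F c) (τ : ℍ) :
    HasSum (fun n => c n • Function.Periodic.qParam 1 τ ^ n) (F τ) := by
  convert hF τ using 2 with n
  rw [Function.Periodic.qParam, smul_eq_mul, ← Complex.exp_nat_mul]
  push_cast
  ring_nf

lemma HasExpansion.coeff_unique {Γ : Subgroup (GL (Fin 2) ℝ)} {k : ℤ} {F : Type*} [FunLike F ℍ ℂ]
    [ModularFormClass F Γ k] (hΓ : 1 ∈ Γ.strictPeriods) {f : F} {c₁ c₂ : ℕ → ℂ}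
    (h₁ : HasExpansion 1 f c₁) (h₂ : HasExpansion 1 f c₂) : c₁ = c₂ := by
  funext n
  rw [ModularFormClass.qExpansion_coeff_unique one_pos hΓ h₁.hasSum_qParam,
    ModularFormClass.qExpansion_coeff_unique one_pos hΓ h₂.hasSum_qParam]

lemma dvd_of_cexp_two_pi_I_mul_div_eq_one {N : ℕ} (hN : N ≠ 0) {a : ℤ}
    (h : cexp (2 * π * Complex.I * (a / N)) = 1) : (N : ℤ) ∣ a := by
  obtain ⟨K, hK⟩ := Complex.exp_eq_one_iff.mp h
  have hK' : (a : ℂ) = K * N := by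
    have h2πI : 2 * π * Complex.I ≠ 0 := by simp [Real.pi_ne_zero]
    field_simp at hK
    linear_combination hK
  exact ⟨K, by exact_mod_cast hK'.trans (mul_comm _ _)⟩

lemma HasExpansion.dvd_mul_of_apply_eq_apply_vadd {Γ : Subgroup (GL (Fin 2) ℝ)} {k : ℤ}
    {F : Type*} [FunLike F ℍ ℂ] [ModularFormClass F Γ k] {h : F} {ch : ℕ → ℂ}
    (hch : HasExpansion 1 h ch) (hΓ : 1 ∈ Γ.strictPeriods) {N : ℕ} (hN : N ≠ 0) {f : ℍ → ℂ}
    {cf : ℕ → ℂ} (hcf : HasExpansion 1 f cf) {M : ℤ} (htrans : ∀ τ, h τ = f ((-(M : ℝ) / N) +ᵥ τ))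
    {n : ℕ} (hn : ch n = cf n) (hn0 : cf n ≠ 0) : (N : ℤ) ∣ n * M := by
  have hcoeff := congrFun (hch.coeff_unique hΓ (funext htrans ▸ hcf.vadd _)) n
  rw [hn, eq_comm, mul_eq_left₀ hn0] at hcoeff
  have := dvd_of_cexp_two_pi_I_mul_div_eq_one hN (a := n * -M) (by
    convert hcoeff using 2
    push_cast
    ring)
  rwa [mul_neg, dvd_neg] at this

lemma exists_inv_lowerUnipotent_mul_mem_Gamma0 {N s r : ℕ} (hN : N = s ^ 2 * r) (hN0 : N ≠ 0)
    {g : SL(2, ℤ)} (hg : (N : ℤ) ∣ s * g 1 0) :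
    ∃ j : ℤ, (lowerUnipotent (s * r * j))⁻¹ * g ∈ Gamma0 N := by
  have hs : s ≠ 0 := by rintro rfl; simp_all
  obtain ⟨t, ht⟩ : (s * r : ℤ) ∣ g 1 0 := by
    rwa [hN, Nat.cast_mul, Nat.cast_pow, sq, mul_assoc,
      mul_dvd_mul_iff_left (Nat.cast_ne_zero.mpr hs)] at hg
  have hdet : g 0 0 * g 1 1 - g 0 1 * g 1 0 = 1 := by
    rw [← Matrix.det_fin_two]; exact g.det_coe
  refine ⟨t * g 1 1, ?_⟩
  rw [Gamma0_mem_iff_dvd, inv_lowerUnipotent_mul_apply_one_zero, hN]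
  exact ⟨-(r * t ^ 2 * g 0 1), by
    push_cast; linear_combination (-(s * r * t) : ℤ) * hdet + (1 - s * r * t * g 0 1) * ht⟩

lemma dvd_of_dvd_mul_of_coprime {N s r n : ℕ} (hN : N = s ^ 2 * r) (hN0 : N ≠ 0)
    (hn : n.Coprime s) {j : ℤ} (h : (N : ℤ) ∣ n * (s * r * j)) : (N : ℤ) ∣ s * r * j := by
  obtain ⟨hs, hr⟩ := mul_ne_zero_iff.mp (hN ▸ hN0 : s ^ 2 * r ≠ 0)
  have hsr : (s * r : ℤ) ≠ 0 := by simp_all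
  have hNsr : (N : ℤ) = s * r * s := by rw [hN]; push_cast; ring
  rw [hNsr, mul_left_comm, mul_dvd_mul_iff_left hsr] at h
  rw [hNsr]
  exact mul_dvd_mul_left _ ((Nat.isCoprime_iff_coprime.mpr hn.symm).dvd_of_dvd_mul_left h)

theorem stmt_16_general (N : ℕ) (hN : 1 ≤ N) (k : ℤ)
    (s : ℕ) (hs24 : s ∣ 24) (hs2 : s ^ 2 ∣ N)
    (hsmax : ∀ t : ℕ, t ∣ 24 → t ^ 2 ∣ N → t ≤ s)
    (w : ℂ) (hw : w = 1 ∨ w = -1)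
    (f h : CuspForm (Gamma0 N) k)
    (hstabf : ∀ γ : SL(2, ℤ), ⇑f ∣[k] γ = ⇑f ↔ γ ∈ Gamma0 N)
    (hstabh : ∀ γ : SL(2, ℤ), ⇑h ∣[k] γ = ⇑h ↔ γ ∈ Gamma0 N)
    (hfW : FrickeEigen N k (⇑f) w) (hhW : FrickeEigen N k (⇑h) w)
    (cf ch : ℕ → ℂ)
    (hcf : HasExpansion 1 (⇑f) cf) (hch : HasExpansion 1 (⇑h) ch)
    (σ : ℂ ≃+* ℂ) (hσ : ∀ n : ℕ, 1 ≤ n → ch n = σ (cf n))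
    (n₀ : ℕ) (hn₀ : 1 ≤ n₀) (hn₀s : Nat.Coprime n₀ s)
    (hrat : ∃ q : ℚ, q ≠ 0 ∧ cf n₀ = (q : ℂ)) :
    ∀ g : SL(2, ℤ), ⇑f ∣[k] g = ⇑h → h = f ∧ g ∈ Gamma0 N := by
  intro g hfg
  have hN0 : N ≠ 0 := Nat.one_le_iff_ne_zero.mp hN
  have hconj : ∀ M ∈ Gamma0 N, g * M * g⁻¹ ∈ Gamma0 N := fun M hM =>
    conj_mem_of_slash_eq (fun γ => (hstabf γ).mp) (fun γ => (hstabh γ).mpr) hfg hM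
  obtain ⟨r, hr⟩ := hs2
  obtain ⟨j, hγ⟩ := exists_inv_lowerUnipotent_mul_mem_Gamma0 hr hN0 <|
    dvd_mul_apply_one_zero_of_conj_mem_Gamma0 hN0 ⟨⟨hs24, ⟨r, hr⟩⟩, fun t ht => hsmax t ht.1 ht.2⟩
      hconj
  have hfM : ⇑f ∣[k] lowerUnipotent (s * r * j) = ⇑h := by
    rw [show lowerUnipotent (s * r * j) = g * ((lowerUnipotent (s * r * j))⁻¹ * g)⁻¹ by group,
      SlashAction.slash_mul, hfg, (hstabh _).mpr (inv_mem hγ)]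
  have hw0 : w ≠ 0 := by rcases hw with rfl | rfl <;> norm_num
  obtain ⟨q, hq0, hq⟩ := hrat
  have hdvd : (N : ℤ) ∣ n₀ * (s * r * j) :=
    hch.dvd_mul_of_apply_eq_apply_vadd (by simp) hN0 hcf
      (hfW.apply_eq_apply_vadd hN0 hw0 hhW hfM) (by rw [hσ n₀ hn₀, hq, map_ratCast])
      (by rw [hq]; exact Rat.cast_ne_zero.mpr hq0)
  have hM : lowerUnipotent (s * r * j) ∈ Gamma0 N :=
    lowerUnipotent_mem_Gamma0 (dvd_of_dvd_mul_of_coprime hr hN0 hn₀s hdvd)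
  refine ⟨DFunLike.coe_injective ?_, ?_⟩
  · rw [← hfM, (hstabf _).mpr hM]
  · simpa only [mul_inv_cancel_left] using mul_mem hM hγ

/-- Let `s` be the largest divisor of `24` with `s² ∣ N`, `w ∈ {±1}`, and
let `f, h` be cusp forms of weight `k ≥ 2` on `Γ₀(N)` whose stabilisers in `SL₂(ℤ)` equal
`Γ₀(N)`, which are `W_N`-eigenvectors with the same eigenvalue `w`, whose coefficients are
related by a field automorphism `σ` of `ℂ`, and such that `a_{n₀}(f)` is a nonzero rational
for some `n₀` coprime to `s`. If `f|_k g = h` for some `g ∈ SL₂(ℤ)`, then `h = f` and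
`g ∈ Γ₀(N)`. -/
theorem stmt_16 (N : ℕ) (hN : 1 ≤ N) (k : ℤ) (hk : 2 ≤ k)
    (s : ℕ) (hs24 : s ∣ 24) (hs2 : s ^ 2 ∣ N)
    (hsmax : ∀ t : ℕ, t ∣ 24 → t ^ 2 ∣ N → t ≤ s)
    (w : ℂ) (hw : w = 1 ∨ w = -1)
    (f h : CuspForm (Gamma0 N) k)
    (hstabf : ∀ γ : SL(2, ℤ), ⇑f ∣[k] γ = ⇑f ↔ γ ∈ Gamma0 N)
    (hstabh : ∀ γ : SL(2, ℤ), ⇑h ∣[k] γ = ⇑h ↔ γ ∈ Gamma0 N)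
    (hfW : FrickeEigen N k (⇑f) w) (hhW : FrickeEigen N k (⇑h) w)
    (cf ch : ℕ → ℂ)
    (hcf : HasExpansion 1 (⇑f) cf) (hch : HasExpansion 1 (⇑h) ch)
    (σ : ℂ ≃+* ℂ) (hσ : ∀ n : ℕ, 1 ≤ n → ch n = σ (cf n))
    (n₀ : ℕ) (hn₀ : 1 ≤ n₀) (hn₀s : Nat.Coprime n₀ s)
    (hrat : ∃ q : ℚ, q ≠ 0 ∧ cf n₀ = (q : ℂ)) :
    ∀ g : SL(2, ℤ), ⇑f ∣[k] g = ⇑h → h = f ∧ g ∈ Gamma0 N :=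
  stmt_16_general N hN k s hs24 hs2 hsmax w hw f h hstabf hstabh hfW hhW cf ch hcf hch σ hσ n₀ hn₀
    hn₀s hrat
end
end
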